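/- Let m, n, T be positive integers at least 2, and set ℓ_x = ⌈log₂ x⌉. Then (ℓ_m² + ℓ_m)/4 · m·T·(n−1) + (T−1)(n−1) ≤ (ℓ_{mnT}² + ℓ_{mnT})/4 · m·n·T, i.e., the per-client threshold determination of Starfish uses no more secure comparisons than sorting all mnT historical gradient entries at once. -/

import Mathlib

/-! With `a = ⌈log₂ m⌉` and `b = ⌈log₂ (mnT)⌉`, the bound `mnT ≥ 4m` gives `b ≥ a + 2`, so the
per-entry sorting cost `(b² + b)/4` exceeds `(a² + a)/4` by at least `a + 3/2 ≥ 1`. That surplus,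
paid on all `mnT` entries, covers the `(T - 1)(n - 1)` comparisons spent on maxima. -/

theorem Nat.clog_add_le_clog_pow_mul {b m : ℕ} (hb : 1 < b) (hm : 1 < m) (k : ℕ) :
    Nat.clog b m + k ≤ Nat.clog b (b ^ k * m) := by
  have hpos := Nat.clog_pos hb hm
  suffices b ^ (Nat.clog b m - 1 + k) < b ^ k * m by
    have := (Nat.lt_clog_iff_pow_lt hb).mpr this
    omega
  rw [pow_add, mul_comm]
  exact Nat.mul_lt_mul_of_pos_left (Nat.pow_pred_clog_lt_self hb hm) (by positivity)

theorem bitonic_cost_add_max_cost_le {a b m n T : ℝ} (ha : 0 ≤ a) (hab : a + 2 ≤ b)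
    (hm : 1 ≤ m) (hn : 1 ≤ n) (hT : 1 ≤ T) :
    (a ^ 2 + a) / 4 * m * T * (n - 1) + (T - 1) * (n - 1) ≤ (b ^ 2 + b) / 4 * m * n * T := by
  have hquad : (a ^ 2 + a) / 4 + 1 ≤ (b ^ 2 + b) / 4 := by nlinarith
  have hmnT : 0 ≤ m * n * T := by positivity
  calc (a ^ 2 + a) / 4 * m * T * (n - 1) + (T - 1) * (n - 1)
      ≤ (a ^ 2 + a) / 4 * m * n * T + m * n * T := by
        have : 0 ≤ (a ^ 2 + a) / 4 * m * T := by positivity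
        nlinarith [mul_nonneg (sub_nonneg.2 hm) (by positivity : 0 ≤ n * T)]
    _ = ((a ^ 2 + a) / 4 + 1) * (m * n * T) := by ring
    _ ≤ (b ^ 2 + b) / 4 * (m * n * T) := mul_le_mul_of_nonneg_right hquad hmnT
    _ = (b ^ 2 + b) / 4 * m * n * T := by ring

/-- The per-client threshold determination of Starfish uses no more secure comparisons
than sorting all `mnT` historical gradient entries at once:
`(ℓ_m² + ℓ_m)/4·m·T·(n−1) + (T−1)(n−1) ≤ (ℓ_{mnT}² + ℓ_{mnT})/4·m·n·T`,
where `ℓ_x = ⌈log₂ x⌉`. -/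
theorem stmt_15 (m n T : ℕ) (hm : 2 ≤ m) (hn : 2 ≤ n) (hT : 2 ≤ T) :
    ((Nat.clog 2 m : ℝ) ^ 2 + (Nat.clog 2 m : ℝ)) / 4 * m * T * ((n : ℝ) - 1) +
        ((T : ℝ) - 1) * ((n : ℝ) - 1) ≤
      ((Nat.clog 2 (m * n * T) : ℝ) ^ 2 + (Nat.clog 2 (m * n * T) : ℝ)) / 4 *
        m * n * T := by
  have hclog : Nat.clog 2 m + 2 ≤ Nat.clog 2 (m * n * T) :=
    calc Nat.clog 2 m + 2 ≤ Nat.clog 2 (2 ^ 2 * m) := Nat.clog_add_le_clog_pow_mul one_lt_two hm 2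
      _ ≤ Nat.clog 2 (m * n * T) := Nat.clog_mono_right 2 <|
        calc 2 ^ 2 * m = m * 2 * 2 := by ring
          _ ≤ m * n * T := by gcongr
  apply bitonic_cost_add_max_cost_le (Nat.cast_nonneg _) (by exact_mod_cast hclog)
  all_goals norm_cast; omega
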